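/- arXiv:1304.4005 — 4 statements merged into one kernel-verified Lean document; each statement's English description precedes it below -/
import Mathlib

section
/- Let F1 and F2 be distinct points in the plane. Let two rays from F2 intersect a ray from F1 at points h and e respectively, with angles α = ∠F1F2h, β = ∠F1F2e, γ = ∠hF1F2. Let u be a point with ∠F1F2u = φ such that dist(F1,h) − dist(F2,h) = dist(F1,u) − dist(F2,u) and dist(F1,e) + dist(F2,e) = dist(F1,u) + dist(F2,u). Then cos φ = cos((α+β)/2) / cos((α−β)/2); in particular φ depends only on α and β and not on γ. -/
/-!
By the law of sines, Mollweide's formulas express the focal difference `D = dist F1 h - dist F2 h`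
and the focal sum `S = dist F1 e + dist F2 e` through the angles at the foci:
`D sin ((α + γ)/2) = c sin ((α - γ)/2)` and `S cos ((β + γ)/2) = c cos ((β - γ)/2)`, with
`c = dist F1 F2`. Since `u` has the same focal difference and sum, the law of cosines at `F2` gives
`c² - D S = c (S - D) cos φ`. Multiplying by `sin ((α + γ)/2) cos ((β + γ)/2)` and using
product-to-sum formulas, both sides become multiples of `c² sin γ`, and `γ` cancels.
-/

open EuclideanGeometry Real

theorem Real.sin_eq_two_mul_sin_half_mul_cos_half (x : ℝ) :
    sin x = 2 * sin (x / 2) * cos (x / 2) := by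
  rw [← sin_two_mul]; congr 1; ring

namespace EuclideanGeometry

variable {V P : Type*} [NormedAddCommGroup V] [InnerProductSpace ℝ V] [MetricSpace P]
  [NormedAddTorsor V P]

theorem angle_left_eq_of_sameRay {o p q : P} (x : P) (hray : SameRay ℝ (p -ᵥ o) (q -ᵥ o))
    (hp : p ≠ o) (hq : q ≠ o) : ∠ p o x = ∠ q o x := by
  obtain ⟨r, hr, hrq⟩ := hray.exists_pos_left (vsub_ne_zero.2 hp) (vsub_ne_zero.2 hq)
  exact (angle_smul_left_of_pos x hr hrq).symm

theorem sin_angle_add_angle_eq_sin_angle {A B : P} (C : P) (hAB : B ≠ A) :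
    sin (∠ A B C + ∠ C A B) = sin (∠ B C A) := by
  rw [← sin_pi_sub, ← angle_add_angle_add_angle_eq_pi C hAB]
  congr 1; ring

theorem dist_mul_sin_angle_add_angle_left {A B : P} (C : P) (hAB : B ≠ A) :
    dist A C * sin (∠ A B C + ∠ C A B) = dist A B * sin (∠ A B C) := by
  rw [sin_angle_add_angle_eq_sin_angle C hAB, dist_comm A C]
  linarith [law_sin B C A]

theorem dist_mul_sin_angle_add_angle_right {A B : P} (C : P) (hAB : B ≠ A) :
    dist B C * sin (∠ A B C + ∠ C A B) = dist A B * sin (∠ C A B) := by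
  rw [sin_angle_add_angle_eq_sin_angle C hAB]
  linarith [law_sin C A B]

theorem mollweide_sub {A B : P} (C : P) (hAB : B ≠ A)
    (hcos : cos ((∠ A B C + ∠ C A B) / 2) ≠ 0) :
    (dist A C - dist B C) * sin ((∠ A B C + ∠ C A B) / 2)
      = dist A B * sin ((∠ A B C - ∠ C A B) / 2) := by
  have hA := dist_mul_sin_angle_add_angle_left C hAB
  have hB := dist_mul_sin_angle_add_angle_right C hAB
  set a := ∠ A B C
  set g := ∠ C A B
  refine mul_left_cancel₀ (mul_ne_zero two_ne_zero hcos) ?_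
  linear_combination hA - hB + dist A B * sin_sub_sin a g
    - (dist A C - dist B C) * sin_eq_two_mul_sin_half_mul_cos_half (a + g)

theorem mollweide_add {A B : P} (C : P) (hAB : B ≠ A)
    (hsin : sin ((∠ A B C + ∠ C A B) / 2) ≠ 0) :
    (dist A C + dist B C) * cos ((∠ A B C + ∠ C A B) / 2)
      = dist A B * cos ((∠ A B C - ∠ C A B) / 2) := by
  have hA := dist_mul_sin_angle_add_angle_left C hAB
  have hB := dist_mul_sin_angle_add_angle_right C hAB
  set a := ∠ A B C
  set g := ∠ C A B
  refine mul_left_cancel₀ (mul_ne_zero two_ne_zero hsin) ?_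
  linear_combination hA + hB + dist A B * sin_add_sin a g - (dist A C + dist B C) * sin_eq_two_mul_sin_half_mul_cos_half (a + g)

theorem dist_sq_sub_dist_sub_dist_mul_dist_add_dist (A B C : P) :
    dist A B ^ 2 - (dist A C - dist B C) * (dist A C + dist B C)
      = dist A B * ((dist A C + dist B C) - (dist A C - dist B C)) * cos (∠ A B C) := by
  have h := law_cos A B C
  rw [dist_comm C B] at h
  linear_combination -h

end EuclideanGeometry

theorem confocal_cos_eq {α β γ c D S t : ℝ} (hc : c ≠ 0) (hγ : sin γ ≠ 0)
    (hαβ : cos ((α - β) / 2) ≠ 0)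
    (hD : D * sin ((α + γ) / 2) = c * sin ((α - γ) / 2))
    (hS : S * cos ((β + γ) / 2) = c * cos ((β - γ) / 2))
    (ht : c ^ 2 - D * S = c * (S - D) * t) :
    t = cos ((α + β) / 2) / cos ((α - β) / 2) := by
  have hnum : sin ((α + γ) / 2) * cos ((β + γ) / 2) - sin ((α - γ) / 2) * cos ((β - γ) / 2)
      = cos ((α + β) / 2) * sin γ := by
    rw [sin_eq_two_mul_sin_half_mul_cos_half γ]
    simp only [add_div, sub_div, sin_add, sin_sub, cos_add, cos_sub]
    ring
  have hden : cos ((β - γ) / 2) * sin ((α + γ) / 2) - sin ((α - γ) / 2) * cos ((β + γ) / 2)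
      = cos ((α - β) / 2) * sin γ := by
    rw [sin_eq_two_mul_sin_half_mul_cos_half γ]
    simp only [add_div, sub_div, sin_add, sin_sub, cos_add, cos_sub]
    ring
  have key : c ^ 2 * (sin ((α + γ) / 2) * cos ((β + γ) / 2)
        - sin ((α - γ) / 2) * cos ((β - γ) / 2))
      = c ^ 2 * t * (cos ((β - γ) / 2) * sin ((α + γ) / 2)
        - sin ((α - γ) / 2) * cos ((β + γ) / 2)) := by
    linear_combination sin ((α + γ) / 2) * cos ((β + γ) / 2) * ht
      + (S * cos ((β + γ) / 2) - c * t * cos ((β + γ) / 2)) * hD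
      + (c * sin ((α - γ) / 2) + c * t * sin ((α + γ) / 2)) * hS
  rw [hnum, hden] at key
  rw [eq_div_iff hαβ]
  refine mul_left_cancel₀ (mul_ne_zero (pow_ne_zero 2 hc) hγ) ?_
  linear_combination -key

theorem stmt0_general
    (F1 F2 h e u : EuclideanSpace ℝ (Fin 2))
    (α β γ φ : ℝ)
    (hF : F1 ≠ F2)
    (hh1 : h ≠ F1) (he1 : e ≠ F1)
    (hray : SameRay ℝ (h - F1) (e - F1))  -- h and e lie on a common ray from F1
    (hα : α = ∠ F1 F2 h) (hβ : β = ∠ F1 F2 e) (hγ : γ = ∠ h F1 F2)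
    (hφ : φ = ∠ F1 F2 u)
    (hα0 : 0 < α) (hαπ : α < π) (hβ0 : 0 < β) (hβπ : β < π)
    (hγ0 : 0 < γ) (hγπ : γ < π)
    (hαγ : α + γ < π) (hβγ : β + γ < π)
    (hhyp : dist F1 h - dist F2 h = dist F1 u - dist F2 u)
    (hell : dist F1 e + dist F2 e = dist F1 u + dist F2 u) :
    Real.cos φ = Real.cos ((α + β) / 2) / Real.cos ((α - β) / 2) := by
  have hγe : ∠ e F1 F2 = γ := hγ ▸ angle_left_eq_of_sameRay F2 hray.symm he1 hh1
  subst hα hβ hγ hφ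
  have hD := mollweide_sub h hF.symm (cos_pos_of_mem_Ioo ⟨by linarith, by linarith⟩).ne'
  have hS := mollweide_add e hF.symm (by
    rw [hγe]; exact (sin_pos_of_pos_of_lt_pi (by linarith) (by linarith)).ne')
  rw [hγe] at hS
  refine confocal_cos_eq (dist_ne_zero.2 hF) (sin_pos_of_pos_of_lt_pi hγ0 hγπ).ne'
    (cos_pos_of_mem_Ioo ⟨by linarith, by linarith⟩).ne' hD hS ?_
  rw [hhyp, hell]
  exact dist_sq_sub_dist_sub_dist_mul_dist_add_dist F1 F2 u

theorem stmt0
    (F1 F2 h e u : EuclideanSpace ℝ (Fin 2))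
    (α β γ φ : ℝ)
    (hF : F1 ≠ F2)
    (hh1 : h ≠ F1) (hh2 : h ≠ F2) (he1 : e ≠ F1) (he2 : e ≠ F2)
    (hu1 : u ≠ F1) (hu2 : u ≠ F2)
    (hray : SameRay ℝ (h - F1) (e - F1))  -- h and e lie on a common ray from F1
    (hα : α = ∠ F1 F2 h) (hβ : β = ∠ F1 F2 e) (hγ : γ = ∠ h F1 F2)
    (hφ : φ = ∠ F1 F2 u)
    (hα0 : 0 < α) (hαπ : α < π) (hβ0 : 0 < β) (hβπ : β < π)
    (hγ0 : 0 < γ) (hγπ : γ < π)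
    (hαγ : α + γ < π) (hβγ : β + γ < π)
    (hhyp : dist F1 h - dist F2 h = dist F1 u - dist F2 u)
    (hell : dist F1 e + dist F2 e = dist F1 u + dist F2 u) :
    Real.cos φ = Real.cos ((α + β) / 2) / Real.cos ((α - β) / 2) :=
  stmt0_general F1 F2 h e u α β γ φ hF hh1 he1 hray hα hβ hγ hφ hα0 hαπ hβ0 hβπ hγ0 hγπ hαγ hβγ hhyp
    hell
end

section
/- Lemma 1(a): Let F1, F2 be distinct points in the plane. Let two rays from F1 intersect two rays from F2 in four points e1, e2, h1, h2, where e1, h1 lie on one ray from F1 and e2, h2 on the other, e1, e2 on one ray from F2 and h1, h2 on the other. Let E1, E2 be the ellipses with foci F1, F2 through e1, e2 respectively, and H1, H2 the branches of hyperbolas with foci F1, F2 through h1, h2 respectively (each branch around F2). If p is a point of intersection of E1 and H1 and q is a point of intersection of E2 and H2 (on the corresponding sides), then p, q, and F2 are collinear. -/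
/-!
Write `α x`, `β x` for the angles at `F1`, `F2` of the triangle `F1 F2 x`, `s`, `t` for the sum
and the difference of the focal distances of `x`, and `d = dist F1 F2`. The law of cosines gives
`tan (α/2) * tan (β/2) = (s - d) / (s + d)` and `tan (α/2) / tan (β/2) = (d - t) / (d + t)`, so the
first is constant on a confocal ellipse and the second on a confocal hyperbola branch. For `p` on
`E1 ∩ H1` this yields `tan² (β p / 2) = tan (β e1 / 2) * tan (β h1 / 2)`, because `α e1 = α h1`;
likewise for `q`, and `e2`, `h2` see the same angles at `F2` as `e1`, `h1`. Hence `β p = β q`,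
and since `p`, `q` lie on the same side of `F1 F2` they lie on one ray from `F2`.
-/

open EuclideanGeometry Real

-- `tan (θ / 2) ^ 2`; at `θ = π` division by zero gives `0`, the value at `θ = 0`.
noncomputable def tanHalfSq (θ : ℝ) : ℝ := (1 - cos θ) / (1 + cos θ)

lemma tanHalfSq_nonneg (θ : ℝ) : 0 ≤ tanHalfSq θ :=
  div_nonneg (by linarith [cos_le_one θ]) (by linarith [neg_one_le_cos θ])

lemma neg_one_lt_cos_of_lt_pi {θ : ℝ} (h0 : 0 ≤ θ) (hπ : θ < π) : -1 < cos θ := by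
  simpa using cos_lt_cos_of_nonneg_of_le_pi h0 le_rfl hπ

lemma tanHalfSq_pos {θ : ℝ} (h0 : 0 < θ) (hπ : θ < π) : 0 < tanHalfSq θ := by
  have h1 : cos θ < 1 := by simpa using cos_lt_cos_of_nonneg_of_le_pi le_rfl hπ.le h0
  exact div_pos (by linarith) (by linarith [neg_one_lt_cos_of_lt_pi h0.le hπ])

lemma tanHalfSq_injOn : Set.InjOn tanHalfSq (Set.Ico 0 π) := by
  intro θ hθ φ hφ h
  have hθ' := neg_one_lt_cos_of_lt_pi hθ.1 hθ.2
  have hφ' := neg_one_lt_cos_of_lt_pi hφ.1 hφ.2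
  rw [tanHalfSq, tanHalfSq, div_eq_div_iff (by linarith) (by linarith)] at h
  exact injOn_cos (Set.Ico_subset_Icc_self hθ) (Set.Ico_subset_Icc_self hφ) (by linarith)

lemma sq_div_eq_div_mul_div {s₁ d₁ s₂ d₂ : ℝ} (h : s₁ * d₁ = s₂ * d₂) (h0 : s₂ * d₂ ≠ 0) :
    (s₁ / d₂) ^ 2 = s₁ / d₁ * (s₂ / d₂) := by
  have hd₁ : d₁ ≠ 0 := by rintro rfl; simp_all
  have hd₂ : d₂ ≠ 0 := right_ne_zero_of_mul h0
  field_simp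
  linear_combination s₁ * h

section Triangle

variable {V P : Type*} [NormedAddCommGroup V] [InnerProductSpace ℝ V] [MetricSpace P]
  [NormedAddTorsor V P]

lemma tanHalfSq_angle (A B X : P) (hXA : X ≠ A) (hBA : B ≠ A) :
    tanHalfSq (∠ B A X) =
      (dist X B - dist X A + dist A B) * (dist X B + dist X A - dist A B) /
        ((dist X A + dist A B - dist X B) * (dist X A + dist A B + dist X B)) := by
  have hlaw := law_cos B A X
  have hm : 0 < 2 * dist X A * dist A B := by
    have := dist_pos.2 hXA; have := dist_pos.2 hBA.symm; positivity
  rw [tanHalfSq, ← mul_div_mul_left _ _ hm.ne']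
  rw [dist_comm B X, dist_comm B A] at hlaw
  congr 1
  · linear_combination -hlaw
  · linear_combination hlaw

noncomputable def focalSumRatio (F₁ F₂ x : P) : ℝ :=
  (dist x F₁ + dist x F₂ - dist F₁ F₂) / (dist x F₁ + dist x F₂ + dist F₁ F₂)

noncomputable def focalDiffRatio (F₁ F₂ x : P) : ℝ :=
  (dist F₁ F₂ - (dist x F₁ - dist x F₂)) / (dist F₁ F₂ + (dist x F₁ - dist x F₂))

lemma tanHalfSq_angle_at_left_focus {F₁ F₂ x : P} (hF : F₁ ≠ F₂) (hx : x ≠ F₁) :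
    tanHalfSq (∠ F₂ F₁ x) = focalSumRatio F₁ F₂ x * focalDiffRatio F₁ F₂ x := by
  rw [tanHalfSq_angle F₁ F₂ x hx hF.symm, focalSumRatio, focalDiffRatio, div_mul_div_comm]
  congr 1 <;> ring

lemma tanHalfSq_angle_at_right_focus {F₁ F₂ x : P} (hF : F₁ ≠ F₂) (hx : x ≠ F₂) :
    tanHalfSq (∠ F₁ F₂ x) = focalSumRatio F₁ F₂ x / focalDiffRatio F₁ F₂ x := by
  rw [tanHalfSq_angle F₂ F₁ x hx hF, focalSumRatio, focalDiffRatio, div_div_div_eq,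
    dist_comm F₂ F₁]
  congr 1 <;> ring

lemma not_collinear_of_notMem_line {A B X : P} (hAB : A ≠ B) (hX : X ∉ line[ℝ, A, B]) :
    ¬Collinear ℝ {A, B, X} := fun h =>
  hX (h.mem_affineSpan_of_mem_of_ne (by simp) (by simp) (by simp) hAB)

lemma angle_eq_of_sameRay (A : P) {O X Y : P} (h : SameRay ℝ (X -ᵥ O) (Y -ᵥ O)) (hX : X ≠ O)
    (hY : Y ≠ O) : ∠ A O X = ∠ A O Y := by
  obtain ⟨r, hr, hrY⟩ := h.exists_pos_left (vsub_ne_zero.2 hX) (vsub_ne_zero.2 hY)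
  exact (angle_smul_right_of_pos A hr hrY).symm

lemma notMem_of_sameRay {s : AffineSubspace ℝ P} {O X Y : P} (hO : O ∈ s) (hX : X ∉ s)
    (h : SameRay ℝ (X -ᵥ O) (Y -ᵥ O)) (hY : Y ≠ O) : Y ∉ s := by
  have hXO : X ≠ O := by rintro rfl; exact hX hO
  obtain ⟨r, hr, hrY⟩ := h.exists_pos_left (vsub_ne_zero.2 hXO) (vsub_ne_zero.2 hY)
  rw [← vsub_vadd Y O, ← hrY]
  exact (AffineSubspace.sSameSide_smul_vsub_vadd_left hX hO hO hr).left_notMem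

lemma tanHalfSq_angle_sq_eq_mul {F₁ F₂ e h p : P} (hF : F₁ ≠ F₂)
    (he : e ∉ line[ℝ, F₁, F₂]) (hh : h ∉ line[ℝ, F₁, F₂]) (hp : p ∉ line[ℝ, F₁, F₂])
    (hα : ∠ F₂ F₁ e = ∠ F₂ F₁ h)
    (hE : dist p F₁ + dist p F₂ = dist e F₁ + dist e F₂)
    (hH : dist p F₁ - dist p F₂ = dist h F₁ - dist h F₂) :
    tanHalfSq (∠ F₁ F₂ p) ^ 2 = tanHalfSq (∠ F₁ F₂ e) * tanHalfSq (∠ F₁ F₂ h) := by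
  have hF₁ : ∀ {x}, x ∉ line[ℝ, F₁, F₂] → x ≠ F₁ := fun hx hxF =>
    hx (hxF ▸ left_mem_affineSpan_pair ℝ F₁ F₂)
  have hF₂ : ∀ {x}, x ∉ line[ℝ, F₁, F₂] → x ≠ F₂ := fun hx hxF =>
    hx (hxF ▸ right_mem_affineSpan_pair ℝ F₁ F₂)
  have hsum : focalSumRatio F₁ F₂ p = focalSumRatio F₁ F₂ e := by
    rw [focalSumRatio, focalSumRatio, hE]
  have hdiff : focalDiffRatio F₁ F₂ p = focalDiffRatio F₁ F₂ h := by
    rw [focalDiffRatio, focalDiffRatio, hH]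
  have hh' : ¬Collinear ℝ {F₂, F₁, h} := by
    rw [Set.insert_comm]; exact not_collinear_of_notMem_line hF hh
  have hα_pos : 0 < focalSumRatio F₁ F₂ h * focalDiffRatio F₁ F₂ h := by
    rw [← tanHalfSq_angle_at_left_focus hF (hF₁ hh)]
    exact tanHalfSq_pos (angle_pos_of_not_collinear hh') (angle_lt_pi_of_not_collinear hh')
  have hα' : focalSumRatio F₁ F₂ e * focalDiffRatio F₁ F₂ e =
      focalSumRatio F₁ F₂ h * focalDiffRatio F₁ F₂ h := by
    rw [← tanHalfSq_angle_at_left_focus hF (hF₁ he), ← tanHalfSq_angle_at_left_focus hF (hF₁ hh),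
      hα]
  rw [tanHalfSq_angle_at_right_focus hF (hF₂ hp), tanHalfSq_angle_at_right_focus hF (hF₂ he),
    tanHalfSq_angle_at_right_focus hF (hF₂ hh), hsum, hdiff]
  exact sq_div_eq_div_mul_div hα' hα_pos.ne'

lemma collinear_of_angle_eq_of_sSameSide [Fact (Module.finrank ℝ V = 2)] {A O p q : P}
    (hAO : A ≠ O) (h : ∠ A O p = ∠ A O q) (hs : line[ℝ, A, O].SSameSide p q) :
    Collinear ℝ {p, q, O} := by
  have : FiniteDimensional ℝ V := .of_fact_finrank_eq_two
  have : Module.Oriented ℝ V (Fin 2) :=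
    ⟨Module.Basis.orientation (Module.finBasisOfFinrankEq ℝ V Fact.out)⟩
  have hp : p ≠ O := by rintro rfl; exact hs.left_notMem (right_mem_affineSpan_pair ℝ A p)
  have hq : q ≠ O := by rintro rfl; exact hs.right_notMem (right_mem_affineSpan_pair ℝ A q)
  have hsign : (∡ A O p).sign = (∡ A O q).sign := by
    rw [← oangle_swap₂₃_sign A p O, ← oangle_swap₂₃_sign A q O, neg_inj, eq_comm]
    exact hs.oangle_sign_eq (left_mem_affineSpan_pair ℝ A O) (right_mem_affineSpan_pair ℝ A O)
  have hpq : ∡ p O q = 0 := by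
    rw [← oangle_add hp hAO hq, oangle_rev A O p, oangle_eq_of_angle_eq_of_sign_eq h hsign,
      neg_add_cancel]
  rw [Set.pair_comm]
  exact oangle_eq_zero_or_eq_pi_iff_collinear.1 (Or.inl hpq)

end Triangle

theorem stmt2_general
    (F1 F2 e1 e2 h1 h2 p q : EuclideanSpace ℝ (Fin 2))
    (hF : F1 ≠ F2)
    (hne : e1 ≠ F1 ∧ e1 ≠ F2 ∧ e2 ≠ F1 ∧ e2 ≠ F2 ∧ h1 ≠ F1 ∧ h1 ≠ F2 ∧ h2 ≠ F1 ∧ h2 ≠ F2)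
    -- e1, h1 on one ray from F1; e2, h2 on the other ray from F1
    (hrayF1a : SameRay ℝ (e1 - F1) (h1 - F1))
    (hrayF1b : SameRay ℝ (e2 - F1) (h2 - F1))
    -- e1, e2 on one ray from F2; h1, h2 on the other ray from F2
    (hrayF2a : SameRay ℝ (e1 - F2) (e2 - F2))
    (hrayF2b : SameRay ℝ (h1 - F2) (h2 - F2))
    -- nondegeneracy: all rays off the line F1F2
    (hside : (affineSpan ℝ {F1, F2}).SSameSide e1 h1 ∧
             (affineSpan ℝ {F1, F2}).SSameSide e1 p ∧
             (affineSpan ℝ {F1, F2}).SSameSide e1 q)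
    -- p is on the ellipse through e1 and the hyperbola branch through h1
    (hpE : dist p F1 + dist p F2 = dist e1 F1 + dist e1 F2)
    (hpH : dist p F1 - dist p F2 = dist h1 F1 - dist h1 F2)
    -- q is on the ellipse through e2 and the hyperbola branch through h2
    (hqE : dist q F1 + dist q F2 = dist e2 F1 + dist e2 F2)
    (hqH : dist q F1 - dist q F2 = dist h2 F1 - dist h2 F2) :
    Collinear ℝ ({p, q, F2} : Set (EuclideanSpace ℝ (Fin 2))) := by
  obtain ⟨he1F1, he1F2, he2F1, he2F2, hh1F1, hh1F2, hh2F1, hh2F2⟩ := hne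
  obtain ⟨he1h1, he1p, he1q⟩ := hside
  have hF2 : F2 ∈ line[ℝ, F1, F2] := right_mem_affineSpan_pair ℝ F1 F2
  have he2 := notMem_of_sameRay hF2 he1h1.left_notMem hrayF2a he2F2
  have hh2 := notMem_of_sameRay hF2 he1h1.right_notMem hrayF2b hh2F2
  have hp := he1p.right_notMem
  have hq := he1q.right_notMem
  have hvp := tanHalfSq_angle_sq_eq_mul hF he1h1.left_notMem he1h1.right_notMem hp
    (angle_eq_of_sameRay F2 hrayF1a he1F1 hh1F1) hpE hpH
  have hvq := tanHalfSq_angle_sq_eq_mul hF he2 hh2 hq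
    (angle_eq_of_sameRay F2 hrayF1b he2F1 hh2F1) hqE hqH
  rw [← angle_eq_of_sameRay F1 hrayF2a he1F2 he2F2,
    ← angle_eq_of_sameRay F1 hrayF2b hh1F2 hh2F2] at hvq
  have hβ_mem : ∀ {x}, x ∉ line[ℝ, F1, F2] → ∠ F1 F2 x ∈ Set.Ico 0 π := fun hx =>
    ⟨angle_nonneg _ _ _, angle_lt_pi_of_not_collinear (not_collinear_of_notMem_line hF hx)⟩
  have hβ : ∠ F1 F2 p = ∠ F1 F2 q := tanHalfSq_injOn (hβ_mem hp) (hβ_mem hq)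
    ((sq_eq_sq₀ (tanHalfSq_nonneg _) (tanHalfSq_nonneg _)).1 (hvp.trans hvq.symm))
  have : Fact (Module.finrank ℝ (EuclideanSpace ℝ (Fin 2)) = 2) := ⟨finrank_euclideanSpace_fin⟩
  exact collinear_of_angle_eq_of_sSameSide hF hβ (he1p.symm.trans he1q)

theorem stmt2
    (F1 F2 e1 e2 h1 h2 p q : EuclideanSpace ℝ (Fin 2))
    (hF : F1 ≠ F2)
    (hne : e1 ≠ F1 ∧ e1 ≠ F2 ∧ e2 ≠ F1 ∧ e2 ≠ F2 ∧ h1 ≠ F1 ∧ h1 ≠ F2 ∧ h2 ≠ F1 ∧ h2 ≠ F2)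
    (hdist : e1 ≠ e2 ∧ e1 ≠ h1 ∧ e1 ≠ h2 ∧ e2 ≠ h1 ∧ e2 ≠ h2 ∧ h1 ≠ h2)
    -- e1, h1 on one ray from F1; e2, h2 on the other ray from F1
    (hrayF1a : SameRay ℝ (e1 - F1) (h1 - F1))
    (hrayF1b : SameRay ℝ (e2 - F1) (h2 - F1))
    -- e1, e2 on one ray from F2; h1, h2 on the other ray from F2
    (hrayF2a : SameRay ℝ (e1 - F2) (e2 - F2))
    (hrayF2b : SameRay ℝ (h1 - F2) (h2 - F2))
    -- nondegeneracy: all rays off the line F1F2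
    (hside : (affineSpan ℝ {F1, F2}).SSameSide e1 h1 ∧
             (affineSpan ℝ {F1, F2}).SSameSide e1 p ∧
             (affineSpan ℝ {F1, F2}).SSameSide e1 q)
    -- p is on the ellipse through e1 and the hyperbola branch through h1
    (hpE : dist p F1 + dist p F2 = dist e1 F1 + dist e1 F2)
    (hpH : dist p F1 - dist p F2 = dist h1 F1 - dist h1 F2)
    -- q is on the ellipse through e2 and the hyperbola branch through h2
    (hqE : dist q F1 + dist q F2 = dist e2 F1 + dist e2 F2)
    (hqH : dist q F1 - dist q F2 = dist h2 F1 - dist h2 F2) :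
    Collinear ℝ ({p, q, F2} : Set (EuclideanSpace ℝ (Fin 2))) :=
  stmt2_general F1 F2 e1 e2 h1 h2 p q hF hne hrayF1a hrayF1b hrayF2a hrayF2b hside hpE hpH hqE hqH
end

section
/- Let F1, F2 be distinct points in the plane and let P be a point on a branch of a hyperbola with foci F1, F2 (i.e., dist(P,F1) − dist(P,F2) constant), P ≠ F1, P ≠ F2, P not on segment F1F2. Then the tangent line to the hyperbola at P bisects the angle ∠F1PF2. -/
open RealInnerProductSpace

theorem inner_eq_norm_mul_inner_inv_norm_smul {E : Type*} [NormedAddCommGroup E]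
    [InnerProductSpace ℝ E] (v x : E) : ⟪v, x⟫ = ‖x‖ * ⟪v, ‖x‖⁻¹ • x⟫ := by
  rcases eq_or_ne x 0 with rfl | hx
  · simp
  · rw [real_inner_smul_right, mul_inv_cancel_left₀ (norm_ne_zero_iff.2 hx)]

theorem inner_mul_norm_eq_of_inner_inv_norm_smul_eq {E : Type*} [NormedAddCommGroup E]
    [InnerProductSpace ℝ E] {v x y : E} (h : ⟪v, ‖x‖⁻¹ • x⟫ = ⟪v, ‖y‖⁻¹ • y⟫) :
    ⟪v, x⟫ * ‖y‖ = ⟪v, y⟫ * ‖x‖ := by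
  rw [inner_eq_norm_mul_inner_inv_norm_smul v x, inner_eq_norm_mul_inner_inv_norm_smul v y, h]
  ring

theorem stmt9_general
    (F1 F2 P : EuclideanSpace ℝ (Fin 2))
    (u1 u2 : EuclideanSpace ℝ (Fin 2))
    (hu1 : u1 = (dist P F1)⁻¹ • (P - F1))
    (hu2 : u2 = (dist P F2)⁻¹ • (P - F2))
    -- v is a direction vector of the tangent line to the hyperbola at P
    (v : EuclideanSpace ℝ (Fin 2))
    (htang : ⟪v, u1 - u2⟫ = 0) :
    -- the tangent bisects the angle ∠F1PF2: equal angles with rays PF1 and PF2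
    |⟪v, F1 - P⟫| * dist P F2 = |⟪v, F2 - P⟫| * dist P F1 := by
  subst hu1 hu2
  rw [inner_sub_right, sub_eq_zero, dist_eq_norm, dist_eq_norm] at htang
  have key := congrArg abs (inner_mul_norm_eq_of_inner_inv_norm_smul_eq htang)
  rw [abs_mul, abs_mul, abs_norm, abs_norm] at key
  rw [← neg_sub P F1, ← neg_sub P F2, inner_neg_right, inner_neg_right, abs_neg, abs_neg,
    dist_eq_norm, dist_eq_norm, key]

theorem stmt9
    (F1 F2 P : EuclideanSpace ℝ (Fin 2))
    (hF : F1 ≠ F2) (hP1 : P ≠ F1) (hP2 : P ≠ F2)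
    (hnotseg : P ∉ segment ℝ F1 F2)
    (u1 u2 : EuclideanSpace ℝ (Fin 2))
    (hu1 : u1 = (dist P F1)⁻¹ • (P - F1))
    (hu2 : u2 = (dist P F2)⁻¹ • (P - F2))
    -- v is a direction vector of the tangent line to the hyperbola at P
    (v : EuclideanSpace ℝ (Fin 2)) (hv : v ≠ 0)
    (htang : ⟪v, u1 - u2⟫ = 0) :
    -- the tangent bisects the angle ∠F1PF2: equal angles with rays PF1 and PF2
    |⟪v, F1 - P⟫| * dist P F2 = |⟪v, F2 - P⟫| * dist P F1 :=
  stmt9_general F1 F2 P u1 u2 hu1 hu2 v htang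
end

section
/- Let F1, F2 be distinct points and let P lie on a hyperbola branch H with foci F1, F2 (P not on line F1F2). If a billiard particle's incoming ray at P passes through F2, then the outgoing reflected ray lies on a line through F1 (the reflected ray, extended backwards, passes through F1). -/
/-!
The normal at `P` is `u1 - u2` for the unit vectors `u1, u2` from the foci, and reflection across
`(u1 - u2)ᗮ` swaps two vectors of equal norm; so the reflected direction is `u1`, a positive
multiple of `P - F1`.
-/

open RealInnerProductSpace

theorem norm_inv_dist_smul_sub {E : Type*} [NormedAddCommGroup E] [NormedSpace ℝ E] {x y : E}
    (h : x ≠ y) : ‖(dist x y)⁻¹ • (x - y)‖ = 1 := by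
  rw [norm_smul, norm_inv, Real.norm_of_nonneg dist_nonneg, dist_eq_norm,
    inv_mul_cancel₀ (norm_ne_zero_iff.2 (sub_ne_zero.2 h))]

section reflection

variable {E : Type*} [NormedAddCommGroup E] [InnerProductSpace ℝ E]

theorem Submodule.reflection_orthogonalComplement_singleton_apply (n x : E) :
    reflection (ℝ ∙ n)ᗮ x = x - (2 * ⟪x, n⟫ / ⟪n, n⟫) • n := by
  rw [reflection_orthogonal_apply, reflection_singleton_apply, real_inner_self_eq_norm_sq,
    real_inner_comm]
  module

theorem Submodule.reflection_sub_right {v w : E} (h : ‖v‖ = ‖w‖) :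
    reflection (ℝ ∙ (v - w))ᗮ w = v :=
  ((reflection _).symm_apply_eq.1 (reflection_sub h)).symm

end reflection

theorem stmt14_general
    (F1 F2 P : EuclideanSpace ℝ (Fin 2))
    (u1 u2 n din r : EuclideanSpace ℝ (Fin 2))
    (hu1 : u1 = (dist P F1)⁻¹ • (P - F1))
    (hu2 : u2 = (dist P F2)⁻¹ • (P - F2))
    -- n is the normal to the hyperbola at P
    (hn : n = u1 - u2)
    -- incoming direction along the ray from F2 to P
    (hdin : din = (dist P F2)⁻¹ • (P - F2))
    -- r is the reflection of din across the tangent line at P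
    (hr : r = din - (2 * ⟪din, n⟫ / ⟪n, n⟫) • n) :
    -- the reflected ray lies on a line through F1
    SameRay ℝ r (P - F1) := by
  subst hu1 hu2 hn hdin hr
  rcases eq_or_ne P F1 with rfl | hPF1
  · simp
  rcases eq_or_ne P F2 with rfl | hPF2
  · simp
  have hunit : ‖(dist P F1)⁻¹ • (P - F1)‖ = ‖(dist P F2)⁻¹ • (P - F2)‖ := by
    rw [norm_inv_dist_smul_sub hPF1, norm_inv_dist_smul_sub hPF2]
  rw [← Submodule.reflection_orthogonalComplement_singleton_apply,
    Submodule.reflection_sub_right hunit]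
  exact SameRay.sameRay_nonneg_smul_left _ (inv_nonneg.2 dist_nonneg)

theorem stmt14
    (F1 F2 P : EuclideanSpace ℝ (Fin 2))
    (hF : F1 ≠ F2)
    (hncol : ¬ Collinear ℝ ({F1, F2, P} : Set (EuclideanSpace ℝ (Fin 2))))
    (u1 u2 n din r : EuclideanSpace ℝ (Fin 2))
    (hu1 : u1 = (dist P F1)⁻¹ • (P - F1))
    (hu2 : u2 = (dist P F2)⁻¹ • (P - F2))
    -- n is the normal to the hyperbola at P
    (hn : n = u1 - u2)
    -- incoming direction along the ray from F2 to P
    (hdin : din = (dist P F2)⁻¹ • (P - F2))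
    -- r is the reflection of din across the tangent line at P
    (hr : r = din - (2 * ⟪din, n⟫ / ⟪n, n⟫) • n) :
    -- the reflected ray lies on a line through F1
    SameRay ℝ r (P - F1) :=
  stmt14_general F1 F2 P u1 u2 n din r hu1 hu2 hn hdin hr
end
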